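/- For S the swap operator on C^N ⊗ C^N and U_t = exp(itS) = cos t · 1 + i sin t · S, the linear operator entanglements satisfy E(U_t) = E(S)(1 − cos⁴t) and E(U_t S) = E(S)(1 − sin⁴t), where E(S) = 1 − 1/N². -/

import Mathlib

open Matrix Complex

noncomputable section

/-- The swap operator `S` on `ℂ^N ⊗ ℂ^N`: `⟨iα|S|jβ⟩ = δ_{iβ} δ_{αj}`. -/
def swapOp (N : ℕ) : Matrix (Fin N × Fin N) (Fin N × Fin N) ℂ :=
  Matrix.of fun p q => if p.1 = q.2 ∧ p.2 = q.1 then 1 else 0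

/-- The reshuffled matrix: `(U^R)_{ij,αβ} = U_{iα,jβ}`. -/
def resh (N : ℕ) (U : Matrix (Fin N × Fin N) (Fin N × Fin N) ℂ) :
    Matrix (Fin N × Fin N) (Fin N × Fin N) ℂ :=
  Matrix.of fun p q => U (p.1, q.1) (p.2, q.2)

/-- Linear operator entanglement `E(U) = 1 - (1/N⁴) Tr((U^R U^{R†})²)`. -/
def EE (N : ℕ) (U : Matrix (Fin N × Fin N) (Fin N × Fin N) ℂ) : ℝ :=
  1 - (1 / (N : ℝ) ^ 4) * (((resh N U * (resh N U)ᴴ) ^ 2).trace).re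

/-- Entangling power `e_p(U) = [E(U) + E(US) − E(S)] / E(S)`. -/
def ep (N : ℕ) (U : Matrix (Fin N × Fin N) (Fin N × Fin N) ℂ) : ℝ :=
  (EE N U + EE N (U * swapOp N) - EE N (swapOp N)) / EE N (swapOp N)

/-- Gate typicality `g_t(U) = [E(U) − E(US) + E(S)] / (2 E(S))`. -/
def gt' (N : ℕ) (U : Matrix (Fin N × Fin N) (Fin N × Fin N) ℂ) : ℝ :=
  (EE N U - EE N (U * swapOp N) + EE N (swapOp N)) / (2 * EE N (swapOp N))

/-! Reshuffling is linear with `1^R = J := N|Φ⁺⟩⟨Φ⁺|` and `S^R = S`, so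
`(a • 1 + b • S)^R = a J + b S`. From `S² = 1`, `J² = N J` and `JS = SJ = J`, its Gram matrix is
`(N|a|² + 2 Re(a b̄)) J + |b|² 1`; when `|a|² + |b|² = 1` and `Re(a b̄) = 0` the trace of the square
of this is `N⁴|a|⁴ + N²(1 - |a|⁴)`, i.e. `E(a • 1 + b • S) = (1 - 1/N²)(1 - |a|⁴)`. Finally `S² = 1`
gives `exp(itS) = cos t • 1 + i sin t • S`, and `exp(itS) S = i sin t • 1 + cos t • S`. -/

open scoped Nat ComplexConjugate

theorem NormedSpace.exp_smul_of_mul_self_eq_one {A : Type*} [Ring A] [Algebra ℂ A]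
    [TopologicalSpace A] [IsTopologicalRing A] [ContinuousSMul ℂ A] [T2Space A]
    {a : A} (ha : a * a = 1) (z : ℂ) :
    NormedSpace.exp (z • a) = Complex.cosh z • 1 + Complex.sinh z • a := by
  have hpow : ∀ k : ℕ, a ^ (2 * k) = 1 := fun k => by rw [pow_mul, sq, ha, one_pow]
  rw [NormedSpace.exp_eq_tsum ℂ]
  refine HasSum.tsum_eq (HasSum.even_add_odd ?_ ?_)
  · convert (Complex.hasSum_cosh z).smul_const (1 : A) using 2 with k
    rw [smul_pow, hpow, smul_smul, div_eq_inv_mul]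
  · convert (Complex.hasSum_sinh z).smul_const a using 2 with k
    rw [smul_pow, pow_succ a, hpow, one_mul, smul_smul, div_eq_inv_mul]

section Reshuffling

variable (N : ℕ)

/-- `N |Φ⁺⟩⟨Φ⁺|`, the unnormalised projector onto `∑ᵢ |ii⟩`. -/
def maxEntOp : Matrix (Fin N × Fin N) (Fin N × Fin N) ℂ :=
  Matrix.of fun p q => if p.1 = p.2 ∧ q.1 = q.2 then 1 else 0

theorem swapOp_mul_self : swapOp N * swapOp N = 1 := by
  ext p q
  simp only [Matrix.mul_apply, swapOp, of_apply, Matrix.one_apply]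
  rw [Finset.sum_eq_single (q.2, q.1)]
  · by_cases h : p = q <;> aesop
  · intro r _ hr
    by_cases h1 : p.1 = r.2 <;> by_cases h2 : p.2 = r.1 <;> aesop
  · simp

theorem conjTranspose_swapOp : (swapOp N)ᴴ = swapOp N := by
  ext p q
  simp only [Matrix.conjTranspose_apply, swapOp, of_apply]
  by_cases h1 : p.1 = q.2 <;> by_cases h2 : p.2 = q.1 <;> aesop

theorem maxEntOp_mul_self : maxEntOp N * maxEntOp N = (N : ℂ) • maxEntOp N := by
  ext p q
  simp only [Matrix.mul_apply, maxEntOp, of_apply, Matrix.smul_apply, smul_eq_mul,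
    Fintype.sum_prod_type]
  by_cases hp : p.1 = p.2 <;> by_cases hq : q.1 = q.2 <;> simp [hp, hq]

theorem maxEntOp_mul_swapOp : maxEntOp N * swapOp N = maxEntOp N := by
  ext p q
  simp only [Matrix.mul_apply, maxEntOp, swapOp, of_apply]
  rw [Finset.sum_eq_single (q.2, q.1)]
  · aesop
  · intro r _ hr; by_cases h1 : r.1 = q.2 <;> aesop
  · simp

theorem swapOp_mul_maxEntOp : swapOp N * maxEntOp N = maxEntOp N := by
  ext p q
  simp only [Matrix.mul_apply, maxEntOp, swapOp, of_apply]
  rw [Finset.sum_eq_single (p.2, p.1)]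
  · aesop
  · intro r _ hr; by_cases h1 : p.1 = r.2 <;> aesop
  · simp

theorem conjTranspose_maxEntOp : (maxEntOp N)ᴴ = maxEntOp N := by
  ext p q
  simp only [Matrix.conjTranspose_apply, maxEntOp, of_apply]
  by_cases h1 : p.1 = p.2 <;> by_cases h2 : q.1 = q.2 <;> aesop

theorem trace_maxEntOp : (maxEntOp N).trace = N := by
  simp only [Matrix.trace, diag, maxEntOp, of_apply, and_self, Fintype.sum_prod_type]
  simp

theorem resh_add (U V : Matrix (Fin N × Fin N) (Fin N × Fin N) ℂ) :
    resh N (U + V) = resh N U + resh N V := rfl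

theorem resh_smul (c : ℂ) (U : Matrix (Fin N × Fin N) (Fin N × Fin N) ℂ) :
    resh N (c • U) = c • resh N U := rfl

theorem resh_one : resh N 1 = maxEntOp N := by
  ext p q
  simp only [resh, of_apply, Matrix.one_apply, maxEntOp, Prod.ext_iff]

theorem resh_swapOp : resh N (swapOp N) = swapOp N := by
  ext p q
  simp only [resh, of_apply, swapOp]
  by_cases h1 : p.1 = q.2 <;> by_cases h2 : p.2 = q.1 <;> aesop

theorem resh_smul_one_add_smul_swapOp (a b : ℂ) :
    resh N (a • 1 + b • swapOp N) = a • maxEntOp N + b • swapOp N := by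
  rw [resh_add, resh_smul, resh_smul, resh_one, resh_swapOp]

theorem smul_maxEntOp_add_smul_swapOp_mul_conjTranspose (a b : ℂ) :
    (a • maxEntOp N + b • swapOp N) * (a • maxEntOp N + b • swapOp N)ᴴ =
      ((N * normSq a + 2 * (a * conj b).re : ℝ) : ℂ) • maxEntOp N + (normSq b : ℂ) • 1 := by
  have hcross : a * conj b + conj a * b = (2 * (a * conj b).re : ℝ) := by
    rw [← add_conj, map_mul, conj_conj]
  rw [conjTranspose_add, conjTranspose_smul, conjTranspose_smul, conjTranspose_maxEntOp,
    conjTranspose_swapOp]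
  simp only [add_mul, mul_add, smul_mul_assoc, mul_smul_comm, maxEntOp_mul_self,
    maxEntOp_mul_swapOp, swapOp_mul_maxEntOp, swapOp_mul_self, smul_smul]
  rw [ofReal_add, ofReal_mul, ofReal_natCast, ← hcross, ← mul_conj, ← mul_conj]
  simp only [star_def]
  module

theorem trace_sq_smul_maxEntOp_add_smul_one (c d : ℂ) :
    ((c • maxEntOp N + d • (1 : Matrix (Fin N × Fin N) (Fin N × Fin N) ℂ)) ^ 2).trace =
      c ^ 2 * N ^ 2 + 2 * c * d * N + d ^ 2 * N ^ 2 := by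
  simp only [sq, add_mul, mul_add, smul_mul_assoc, mul_smul_comm, maxEntOp_mul_self,
    Matrix.mul_one, Matrix.one_mul, smul_smul, trace_add, trace_smul, trace_maxEntOp,
    trace_one, Fintype.card_prod, Fintype.card_fin, smul_eq_mul, Nat.cast_mul]
  ring

end Reshuffling

theorem EE_smul_one_add_smul_swapOp {N : ℕ} (hN : 0 < N) {a b : ℂ}
    (hnorm : normSq a + normSq b = 1) (horth : (a * conj b).re = 0) :
    EE N (a • 1 + b • swapOp N) = (1 - 1 / (N : ℝ) ^ 2) * (1 - normSq a ^ 2) := by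
  have hN0 : (N : ℝ) ≠ 0 := by positivity
  rw [EE, resh_smul_one_add_smul_swapOp, smul_maxEntOp_add_smul_swapOp_mul_conjTranspose,
    horth, trace_sq_smul_maxEntOp_add_smul_one, show normSq b = 1 - normSq a by linarith]
  norm_cast
  push_cast
  field_simp
  ring

/-- Operator entanglements of the fractional powers of swap:
`E(U_t) = E(S)(1 − cos⁴ t)` and `E(U_t S) = E(S)(1 − sin⁴ t)`, with `E(S) = 1 − 1/N²`. -/
theorem EE_swap_powers (N : ℕ) (hN : 0 < N) (t : ℝ) :
    EE N (NormedSpace.exp ((Complex.I * (t : ℂ)) • swapOp N)) =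
      (1 - 1 / (N : ℝ) ^ 2) * (1 - Real.cos t ^ 4) ∧
    EE N (NormedSpace.exp ((Complex.I * (t : ℂ)) • swapOp N) * swapOp N) =
      (1 - 1 / (N : ℝ) ^ 2) * (1 - Real.sin t ^ 4) := by
  have hexp : NormedSpace.exp ((I * t) • swapOp N) =
      (Real.cos t : ℂ) • 1 + (I * Real.sin t) • swapOp N := by
    rw [NormedSpace.exp_smul_of_mul_self_eq_one (swapOp_mul_self N), mul_comm, cosh_mul_I,
      sinh_mul_I, ofReal_cos, ofReal_sin, mul_comm]
  have hexp_swap : NormedSpace.exp ((I * t) • swapOp N) * swapOp N =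
      (I * Real.sin t) • 1 + (Real.cos t : ℂ) • swapOp N := by
    rw [hexp, add_mul, smul_mul_assoc, smul_mul_assoc, one_mul, swapOp_mul_self, add_comm]
  have hcos : normSq (Real.cos t) = Real.cos t ^ 2 := by rw [normSq_ofReal, sq]
  have hsin : normSq (I * Real.sin t) = Real.sin t ^ 2 := by
    rw [normSq_mul, normSq_I, normSq_ofReal, one_mul, sq]
  constructor
  · rw [hexp, EE_smul_one_add_smul_swapOp hN
      (by rw [hcos, hsin, Real.cos_sq_add_sin_sq]) (by simp), hcos]
    ring
  · rw [hexp_swap, EE_smul_one_add_smul_swapOp hN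
      (by rw [hcos, hsin, Real.sin_sq_add_cos_sq]) (by simp), hsin]
    ring

end
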